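/- arXiv:math/0606758 — 5 statements merged into one kernel-verified Lean document; each statement's English description precedes it below -/
import Mathlib

section
/- The dihedral angle of a regular tetrahedron, namely arccos(1/3), is an irrational multiple of π; that is, arccos(1/3)/π is irrational. -/
open Real

theorem arccos_third_div_pi_irrational :
    Irrational (Real.arccos (1/3) / Real.pi) := by
  rintro ⟨r, hr⟩
  have hcos : cos (arccos (1 / 3)) = 1 / 3 := cos_arccos (by norm_num) (by norm_num)
  have hangle : arccos (1 / 3) = r * π := by rw [hr, div_mul_cancel₀ _ pi_ne_zero]
  have hniven := niven ⟨r, hangle⟩ ⟨1 / 3, by rw [hcos]; norm_num⟩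
  rw [hcos] at hniven
  norm_num at hniven
end

section
/- There is no pair of positive integers (m, n) with m·arccos(1/3) = n·π. -/
private def aSeq : ℕ → ℤ
  | 0 => 1
  | 1 => 1
  | (k+2) => 2 * aSeq (k+1) - 9 * aSeq k

private lemma aSeq_cos (k : ℕ) :
    Real.cos (k * Real.arccos (1/3)) = aSeq k / 3 ^ k := by
  induction k using Nat.strong_induction_on with
  | _ k ih =>
    match k with
    | 0 => simp [aSeq]
    | 1 =>
      show Real.cos (((1:ℕ):ℝ) * Real.arccos (1/3)) = _
      rw [Nat.cast_one, one_mul, Real.cos_arccos (by norm_num) (by norm_num)]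
      norm_num [aSeq]
    | (k+2) =>
      have h1 := ih (k+1) (by omega)
      have h0 := ih k (by omega)
      set θ := Real.arccos (1/3) with hθ
      have hcθ : Real.cos θ = 1/3 := Real.cos_arccos (by norm_num) (by norm_num)
      have key : Real.cos ((k+2 : ℕ) * θ) =
          2 * Real.cos θ * Real.cos ((k+1 : ℕ) * θ) - Real.cos ((k : ℕ) * θ) := by
        have e1 : ((k+2 : ℕ) : ℝ) * θ = ((k+1 : ℕ) : ℝ) * θ + θ := by push_cast; ring
        have e2 : ((k : ℕ) : ℝ) * θ = ((k+1 : ℕ) : ℝ) * θ - θ := by push_cast; ring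
        rw [e1, e2, Real.cos_add, Real.cos_sub]; ring
      have ha : aSeq (k+2) = 2 * aSeq (k+1) - 9 * aSeq k := rfl
      rw [key, h1, h0, hcθ, ha]
      push_cast
      field_simp
      ring

private lemma aSeq_not_dvd (k : ℕ) : ¬ (3 : ℤ) ∣ aSeq k := by
  have H : ∀ k, ¬ (3 : ℤ) ∣ aSeq k ∧ ¬ (3 : ℤ) ∣ aSeq (k+1) := by
    intro k
    induction k with
    | zero => constructor <;> · simp [aSeq]
    | succ n ihn =>
      refine ⟨ihn.2, ?_⟩
      show ¬ (3 : ℤ) ∣ (2 * aSeq (n+1) - 9 * aSeq n)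
      intro h
      have : (3 : ℤ) ∣ 2 * aSeq (n+1) := by
        have : (3:ℤ) ∣ 9 * aSeq n := ⟨3 * aSeq n, by ring⟩
        omega
      have h3 : (3 : ℤ) ∣ aSeq (n+1) :=
        (Int.prime_three.dvd_mul.mp this).resolve_left (by decide)
      exact ihn.2 h3
  exact (H k).1

theorem no_pos_int_multiple_arccos_third_eq_pi :
    ¬ ∃ m n : ℕ, 0 < m ∧ 0 < n ∧ (m : ℝ) * Real.arccos (1/3) = (n : ℝ) * Real.pi := by
  rintro ⟨m, n, hm, hn, heq⟩
  have hc : Real.cos ((m : ℝ) * Real.arccos (1/3)) = (-1) ^ n := by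
    rw [heq]
    have := Real.cos_add_nat_mul_pi 0 n
    simpa using this
  rw [aSeq_cos m] at hc
  have h3 : (aSeq m : ℝ) = (-1) ^ n * 3 ^ m := by
    field_simp at hc
    linarith [hc]
  have hz : aSeq m = (-1) ^ n * 3 ^ m := by
    exact_mod_cast h3
  have : (3 : ℤ) ∣ aSeq m := by
    rw [hz]
    exact Dvd.dvd.mul_left (dvd_pow_self 3 hm.ne') _
  exact aSeq_not_dvd m this
end

section
/- The complex number (1 + 2√2·i)/3 is not a root of unity. -/
/-!
A root of unity `z` is an algebraic integer, hence so is `z + z⁻¹`. For `z = (1 + 2√2 i)/3`,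
which has modulus one, `z + z⁻¹ = 2 Re z = 2/3` is rational but not an integer.
-/

open Complex

theorem IsIntegral.of_pow_eq_one {R A : Type*} [CommRing R] [Ring A] [Algebra R A] {x : A}
    {n : ℕ} (hn : 0 < n) (hx : x ^ n = 1) : IsIntegral R x :=
  .of_pow hn (hx ▸ isIntegral_one)

theorem IsIntegral.add_inv_of_pow_eq_one {R K : Type*} [CommRing R] [Field K] [Algebra R K]
    {x : K} {n : ℕ} (hn : 0 < n) (hx : x ^ n = 1) : IsIntegral R (x + x⁻¹) :=
  (of_pow_eq_one hn hx).add (of_pow_eq_one hn (by rw [inv_pow, hx, inv_one]))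

theorem Rat.den_eq_one_of_isIntegral {q : ℚ} (hq : IsIntegral ℤ q) : q.den = 1 := by
  obtain ⟨k, rfl⟩ := IsIntegrallyClosed.algebraMap_eq_of_integral hq
  simp

theorem one_add_two_sqrt_two_I_div_three_add_inv :
    (1 + 2 * Real.sqrt 2 * I) / 3 + ((1 + 2 * Real.sqrt 2 * I) / 3)⁻¹ = ((2 / 3 : ℚ) : ℂ) := by
  have hsqrt : (Real.sqrt 2 : ℂ) ^ 2 = 2 := by
    rw [← ofReal_pow, Real.sq_sqrt zero_le_two, ofReal_ofNat]
  have hinv : ((1 + 2 * Real.sqrt 2 * I) / 3)⁻¹ = (1 - 2 * Real.sqrt 2 * I) / 3 := by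
    refine inv_eq_of_mul_eq_one_right ?_
    linear_combination (-4 / 9 : ℂ) * I ^ 2 * hsqrt - (8 / 9 : ℂ) * I_sq
  rw [hinv]
  push_cast
  ring

open Complex in
theorem not_root_of_unity_one_add_two_sqrt_two_I_div_three :
    ∀ n : ℕ, 0 < n → ((1 + 2 * Real.sqrt 2 * I) / 3) ^ n ≠ 1 := by
  intro n hn h
  have hint : IsIntegral ℤ ((2 / 3 : ℚ) : ℂ) :=
    one_add_two_sqrt_two_I_div_three_add_inv ▸ IsIntegral.add_inv_of_pow_eq_one hn h
  rw [IsIntegral.ratCast_iff] at hint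
  exact absurd (Rat.den_eq_one_of_isIntegral hint) (by norm_num)
end

section
/- In the tensor product ℝ ⊗_ℤ (ℝ/πℤ), the element ℓ ⊗ arccos(1/3) is nonzero for any real ℓ ≠ 0. -/
open TensorProduct

/-- Dihedral angles modulo `π`: the quotient of `(ℝ, +)` by the subgroup `ℤ·π`. -/
abbrev AngleMod : Type := ℝ ⧸ AddSubgroup.zmultiples Real.pi

/-- The class of a real angle in `ℝ/πℤ`. -/
noncomputable abbrev angleClass (x : ℝ) : AngleMod := QuotientAddGroup.mk x

namespace DehnAux

/-- Numerators of `cos (n * arccos (1/3))` written over `3^n`. -/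
def a : ℕ → ℤ
  | 0 => 1
  | 1 => 1
  | (n+2) => 2 * a (n+1) - 9 * a n

lemma not_three_dvd_a : ∀ n : ℕ, ¬ (3:ℤ) ∣ a n ∧ ¬ (3:ℤ) ∣ a (n+1) := by
  intro n
  induction n with
  | zero => constructor <;> · simp [a]
  | succ n ih =>
    refine ⟨ih.2, ?_⟩
    have h2 := ih.2
    show ¬ (3:ℤ) ∣ 2 * a (n+1) - 9 * a n
    omega

noncomputable def θ : ℝ := Real.arccos (1/3)

lemma cos_theta : Real.cos θ = 1/3 := by
  apply Real.cos_arccos <;> norm_num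

lemma cos_nat_mul (n : ℕ) : Real.cos (n * θ) = a n / 3 ^ n := by
  induction n using Nat.twoStepInduction with
  | zero => simp [a]
  | one => show Real.cos ((1:ℕ) * θ) = a 1 / 3 ^ 1; simpa [a] using cos_theta
  | more n ih1 ih2 =>
    have key : Real.cos (((n+1:ℕ):ℝ) * θ + θ) + Real.cos (((n+1:ℕ):ℝ) * θ - θ)
        = 2 * Real.cos (((n+1:ℕ):ℝ) * θ) * Real.cos θ := by
      rw [Real.cos_add, Real.cos_sub]; ring
    have e1 : ((n+1:ℕ):ℝ) * θ + θ = ((n+2:ℕ):ℝ) * θ := by push_cast; ring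
    have e2 : ((n+1:ℕ):ℝ) * θ - θ = (n:ℝ) * θ := by push_cast; ring
    rw [e1, e2, ih1, ih2, cos_theta] at key
    have ha : a (n+2) = 2 * a (n+1) - 9 * a n := rfl
    have hc : Real.cos (((n+2:ℕ):ℝ) * θ)
        = 2 * ((a (n+1) : ℝ) / 3 ^ (n+1)) * (1/3) - (a n : ℝ) / 3 ^ n := by linarith
    rw [hc, ha]
    push_cast
    field_simp
    ring

lemma nat_mul_theta_ne (n : ℕ) (hn : 0 < n) (m : ℤ) : (n : ℝ) * θ ≠ (m : ℝ) * Real.pi := by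
  intro h
  have h1 : |Real.cos ((n:ℝ) * θ)| = 1 := by rw [h]; exact Real.abs_cos_int_mul_pi m
  rw [cos_nat_mul n] at h1
  have h3 : (0:ℝ) < 3 ^ n := by positivity
  rw [abs_div, abs_of_pos h3, div_eq_one_iff_eq (ne_of_gt h3)] at h1
  have habs : |a n| = 3 ^ n := by exact_mod_cast h1
  have h3d : (3:ℤ) ∣ 3 ^ n := dvd_pow_self 3 hn.ne'
  have : (3:ℤ) ∣ a n := by
    rcases (abs_eq (by positivity : (0:ℤ) ≤ 3 ^ n)).mp habs with h | h
    · exact h ▸ h3d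
    · exact h ▸ h3d.neg_right
  exact (not_three_dvd_a n).1 this

lemma theta_not_mem_span : θ ∉ Submodule.span ℚ ({Real.pi} : Set ℝ) := by
  rw [Submodule.mem_span_singleton]
  rintro ⟨q, hq⟩
  have hq' : θ = (q : ℝ) * Real.pi := by rw [← hq, Rat.smul_def]
  have hden : (q.den : ℝ) * θ = (q.num : ℝ) * Real.pi := by
    rw [hq']
    have : (q.den : ℝ) * (q : ℝ) = (q.num : ℝ) := by
      exact_mod_cast congrArg (Rat.cast : ℚ → ℝ) (by rw [mul_comm]; exact_mod_cast q.mul_den_eq_num)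
    rw [← mul_assoc, this]
  exact nat_mul_theta_ne q.den q.pos q.num hden

end DehnAux

/-- The Dehn-invariant contribution `ℓ ⊗ arccos(1/3)` is nonzero for `ℓ ≠ 0`. -/
theorem tmul_arccos_third_ne_zero (ℓ : ℝ) (hℓ : ℓ ≠ 0) :
    (ℓ ⊗ₜ[ℤ] angleClass (Real.arccos (1/3)) : ℝ ⊗[ℤ] AngleMod) ≠ 0 := by
  -- get a ℚ-linear functional killing π but not θ
  obtain ⟨f, hfθ, hfπ⟩ := Submodule.exists_dual_map_eq_bot_of_notMem
    DehnAux.theta_not_mem_span inferInstance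
  have hπ0 : f Real.pi = 0 := by
    have : f Real.pi ∈ Submodule.map f (Submodule.span ℚ ({Real.pi} : Set ℝ)) :=
      Submodule.mem_map_of_mem (Submodule.mem_span_singleton_self _)
    rwa [hfπ, Submodule.mem_bot] at this
  set g : ℝ →ₗ[ℚ] ℚ := (f DehnAux.θ)⁻¹ • f with hg
  have hgθ : g DehnAux.θ = 1 := by simp [hg, inv_mul_cancel₀ hfθ]
  have hgπ : g Real.pi = 0 := by simp [hg, hπ0]
  -- realize as additive map ℝ → ℝ
  set ψ : ℝ →+ ℝ :=
    (algebraMap ℚ ℝ).toAddMonoidHom.comp g.toAddMonoidHom with hψdef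
  have hψπ0 : ψ Real.pi = 0 := by simp [hψdef, hgπ]
  have hψπ : ∀ x ∈ AddSubgroup.zmultiples Real.pi, ψ x = 0 := by
    rintro x ⟨n, rfl⟩
    rw [map_zsmul, hψπ0, smul_zero]
  -- descend to AngleMod
  set ψ' : AngleMod →+ ℝ := QuotientAddGroup.lift _ ψ hψπ with hψ'
  have hψ'θ : ψ' (angleClass DehnAux.θ) = 1 := by
    simp [hψ', angleClass, QuotientAddGroup.lift_mk, hψdef, hgθ]
  -- build the linear evaluation on the tensor product
  let B : ℝ →ₗ[ℤ] AngleMod →ₗ[ℤ] ℝ :=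
    LinearMap.mk₂ ℤ (fun x aq => x * ψ' aq)
      (fun x y aq => add_mul x y (ψ' aq))
      (fun n x aq => smul_mul_assoc n x (ψ' aq))
      (fun x aq bq => by show x * ψ' (aq + bq) = x * ψ' aq + x * ψ' bq
                         rw [map_add, mul_add])
      (fun n x aq => by show x * ψ' (n • aq) = n • (x * ψ' aq)
                        rw [map_zsmul, mul_smul_comm])
  let Φ : ℝ ⊗[ℤ] AngleMod →ₗ[ℤ] ℝ := TensorProduct.lift B
  intro h0
  have : Φ (ℓ ⊗ₜ[ℤ] angleClass (Real.arccos (1/3))) = ℓ := by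
    show ℓ * ψ' (angleClass (Real.arccos (1/3))) = ℓ
    have : angleClass (Real.arccos (1/3)) = angleClass DehnAux.θ := rfl
    rw [this, hψ'θ, mul_one]
  rw [h0, map_zero] at this
  exact hℓ this.symm
end

section
/- Let θ ∈ ℝ with θ/π irrational. Then in the abelian group ℝ ⊗_ℤ (ℝ/πℤ), for any nonzero real ℓ, the element ℓ ⊗ [θ] is not equal to any integer combination of elements of the form a ⊗ [π/2]. -/
open TensorProduct

lemma pair_li (θ : ℝ) (hθ : Irrational (θ / Real.pi)) : LinearIndependent ℚ ![θ, Real.pi] := by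
  have hπ : (Real.pi : ℝ) ≠ 0 := Real.pi_ne_zero
  rw [LinearIndependent.pair_iff]
  intro s t h
  simp only [Rat.smul_def] at h
  have hs0 : s = 0 := by
    by_contra hs
    have hs' : (s : ℝ) ≠ 0 := by exact_mod_cast hs
    apply hθ.ne_rat (-(t/s))
    rw [div_eq_iff hπ]
    push_cast
    field_simp
    linarith
  refine ⟨hs0, ?_⟩
  subst hs0
  simp only [Rat.cast_zero, zero_mul, zero_add] at h
  exact_mod_cast mul_eq_zero.mp h |>.resolve_right hπ

lemma exists_functional (θ : ℝ) (hθ : Irrational (θ / Real.pi)) :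
    ∃ f : ℝ →ₗ[ℚ] ℚ, f θ = 1 ∧ f Real.pi = 0 := by
  have hli := (linearIndepOn_id_range_iff (pair_li θ hθ).injective).mpr (pair_li θ hθ)
  have hrange : Set.range ![θ, Real.pi] = {θ, Real.pi} := by
    ext x; simp [Fin.exists_fin_two]; tauto
  rw [hrange] at hli
  have hθne : θ ≠ Real.pi := by
    intro h
    apply hθ
    rw [h, div_self Real.pi_ne_zero]
    exact ⟨1, by norm_num⟩
  let B := Module.Basis.extend hli
  have hθmem : θ ∈ hli.extend (Set.subset_univ _) := hli.subset_extend _ (by left; rfl)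
  have hπmem : Real.pi ∈ hli.extend (Set.subset_univ _) := hli.subset_extend _ (by right; rfl)
  refine ⟨B.coord ⟨θ, hθmem⟩, ?_, ?_⟩
  · have this : B ⟨θ, hθmem⟩ = θ := Module.Basis.extend_apply_self hli ⟨θ, hθmem⟩
    have : B.coord ⟨θ, hθmem⟩ θ = B.coord ⟨θ, hθmem⟩ (B ⟨θ, hθmem⟩) := by rw [this]
    rw [this]; simp [Module.Basis.coord_apply]
  · have this : B ⟨Real.pi, hπmem⟩ = Real.pi := Module.Basis.extend_apply_self hli ⟨Real.pi, hπmem⟩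
    have : B.coord ⟨θ, hθmem⟩ Real.pi = B.coord ⟨θ, hθmem⟩ (B ⟨Real.pi, hπmem⟩) := by rw [this]
    rw [this, Module.Basis.coord_apply, Module.Basis.repr_self, Finsupp.single_apply_eq_zero]
    intro h
    exact absurd (Subtype.mk_eq_mk.mp h) hθne

/-- If `θ/π` is irrational and `ℓ ≠ 0`, then `ℓ ⊗ [θ]` is not an integer
combination of elements of the form `a ⊗ [π/2]` in `ℝ ⊗_ℤ (ℝ/πℤ)`. -/
theorem tmul_ne_int_comb_of_tmul_half_pi (θ : ℝ) (hθ : Irrational (θ / Real.pi))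
    (ℓ : ℝ) (hℓ : ℓ ≠ 0) (n : ℕ) (c : Fin n → ℤ) (a : Fin n → ℝ) :
    (ℓ ⊗ₜ[ℤ] angleClass θ : ℝ ⊗[ℤ] AngleMod) ≠
      ∑ i, c i • (a i ⊗ₜ[ℤ] angleClass (Real.pi / 2)) := by
  obtain ⟨f, hfθ, hfπ⟩ := exists_functional θ hθ
  have hker : AddSubgroup.zmultiples Real.pi ≤ f.toAddMonoidHom.ker := by
    intro x hx
    obtain ⟨k, rfl⟩ := hx
    have hk : ((k:ℝ) * Real.pi) = (k:ℚ) • Real.pi := by rw [Rat.smul_def]; push_cast; ring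
    simp [AddMonoidHom.mem_ker, zsmul_eq_mul, hk, hfπ]
  let g : AngleMod →+ ℚ := QuotientAddGroup.lift _ f.toAddMonoidHom hker
  let φ : ℝ ⊗[ℤ] AngleMod →ₗ[ℤ] ℝ := TensorProduct.lift <| LinearMap.mk₂ ℤ
    (fun x y => x * ((g y : ℚ) : ℝ))
    (fun x x' y => by ring)
    (fun r x y => by simp [zsmul_eq_mul]; ring)
    (fun x y y' => by simp [map_add]; ring)
    (fun r x y => by simp [map_zsmul, zsmul_eq_mul]; ring)
  intro hEq
  have hzero : ∀ i, (a i ⊗ₜ[ℤ] angleClass (Real.pi / 2) : ℝ ⊗[ℤ] AngleMod) = 0 := by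
    intro i
    have h2 : ((2:ℤ) • angleClass (Real.pi / 2)) = (0 : AngleMod) := by
      have : ((2:ℤ) • angleClass (Real.pi / 2)) = angleClass ((2:ℤ) • (Real.pi / 2)) := rfl
      rw [this, show ((2:ℤ) • (Real.pi / 2)) = Real.pi by rw [zsmul_eq_mul]; norm_num; ring]
      exact (QuotientAddGroup.eq_zero_iff _).mpr (AddSubgroup.mem_zmultiples _)
    calc a i ⊗ₜ[ℤ] angleClass (Real.pi / 2)
        = ((2:ℤ) • (a i / 2)) ⊗ₜ[ℤ] angleClass (Real.pi / 2) := by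
          congr 1; rw [zsmul_eq_mul]; ring
      _ = (a i / 2) ⊗ₜ[ℤ] ((2:ℤ) • angleClass (Real.pi / 2)) := TensorProduct.smul_tmul _ _ _
      _ = 0 := by rw [h2, tmul_zero]
  have hrhs : (∑ i, c i • (a i ⊗ₜ[ℤ] angleClass (Real.pi / 2)) : ℝ ⊗[ℤ] AngleMod) = 0 := by
    simp [hzero]
  rw [hrhs] at hEq
  have := congrArg φ hEq
  simp only [map_zero] at this
  have hφ : φ (ℓ ⊗ₜ[ℤ] angleClass θ) = ℓ := by
    have hg : g (angleClass θ) = f θ := rfl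
    simp only [φ]; exact (TensorProduct.lift.tmul _ _).trans (by simp [hg, hfθ])
  rw [hφ] at this
  exact hℓ this
end
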